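/- Let ĝ = (g₁,g₂,g₃) : V → (0,1)³ be a C² function on a neighbourhood V of [−1,1]×𝕋^{d−1} satisfying, for some 0 < c* < C* < 1, c* ≤ g_i ≤ C* for each i and g₁+g₂+g₃ < 1, and set α̂_N(x) = ĝ(x/N) for x ∈ B_N. Then there exists a constant C₂ > 0, depending only on d, λ₁, λ₂, r, c* and C*, such that for every N ≥ 1 and every density f with respect to ν^N_{α̂_N}: Σ_{(ξ,ω)} (𝕃_N √f)(ξ,ω) · √f(ξ,ω) · ν^N_{α̂_N}(ξ,ω) ≤ C₂ N^d. -/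

import Mathlib

open Finset

noncomputable section

namespace SIT

/-- Sites of the box `B_N = {−N,…,N} × (ℤ/Nℤ)^{d−1}`: the first coordinate
`v : Fin (2N+1)` represents the integer `v − N`; the `d−1` transverse
coordinates are periodic of period `N`. -/
abbrev Site (d N : ℕ) : Type := Fin (2 * N + 1) × (Fin (d - 1) → Fin N)

/-- Configurations `(ξ, ω)` of the process: at each site, the pair
`(ξ(x), ω(x)) ∈ {0,1} × {0,1}`. -/
abbrev Config (d N : ℕ) : Type := Site d N → Bool × Bool

variable {d N : ℕ}

/-- The state in `{0,1,2,3}` of a pair `(ξ(x), ω(x))`: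
`(0,0) ↦ 0`, `(1,0) ↦ 1`, `(0,1) ↦ 2`, `(1,1) ↦ 3`. -/
def state : Bool × Bool → Fin 4
  | (false, false) => 0
  | (true, false) => 1
  | (false, true) => 2
  | (true, true) => 3

/-- The pair `(ξ(x), ω(x))` corresponding to a state `i ∈ {0,1,2,3}`. -/
def pairOfState (i : Fin 4) : Bool × Bool :=
  if i = 0 then (false, false) else if i = 1 then (true, false)
    else if i = 2 then (false, true) else (true, true)

/-- `η_i(x)`, as a real-valued indicator. -/
def eta (i : Fin 4) (η : Config d N) (x : Site d N) : ℝ :=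
  if state (η x) = i then 1 else 0

/-- Cyclic successor in `Fin N`. -/
def cyc {N : ℕ} (v : Fin N) : Fin N :=
  ⟨(v.val + 1) % N, Nat.mod_lt _ (Nat.lt_of_le_of_lt (Nat.zero_le _) v.isLt)⟩

/-- `x + e_k`, when it lies in the box `B_N` (the first direction is
non-periodic, the transverse ones are periodic). -/
def step (k : Fin d) (x : Site d N) : Option (Site d N) :=
  if k.val = 0 then
    if h : x.1.val + 1 < 2 * N + 1 then some (⟨x.1.val + 1, h⟩, x.2) else none
  else
    some (x.1, fun j => if j.val = k.val - 1 then cyc (x.2 j) else x.2 j)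

/-- The configuration `(ξ^{x,y}, ω^{x,y})` with the values at `x` and `y` exchanged. -/
def swap (x y : Site d N) (η : Config d N) : Config d N :=
  fun z => if z = x then η y else if z = y then η x else η z

/-- Flip the `ξ`-value at `x` (i.e. `(σ^x ξ, ω)`). -/
def flipXi (x : Site d N) (η : Config d N) : Config d N :=
  Function.update η x (!(η x).1, (η x).2)

/-- Flip the `ω`-value at `x` (i.e. `(ξ, σ^x ω)`). -/
def flipOmega (x : Site d N) (η : Config d N) : Config d N :=
  Function.update η x ((η x).1, !(η x).2)

/-- `σ_{i,x}(ξ,ω)`: the configuration agreeing with `(ξ,ω)` off `x` and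
whose state at `x` is `i`. -/
def setState (i : Fin 4) (x : Site d N) (η : Config d N) : Config d N :=
  Function.update η x (pairOfState i)

/-- A boolean as a real number. -/
def b2r (b : Bool) : ℝ := if b then 1 else 0

/-- The nearest-neighbour relation on `B_N`. -/
def nbr (x y : Site d N) : Prop :=
  ∃ k : Fin d, step k x = some y ∨ step k y = some x

instance (x y : Site d N) : Decidable (nbr x y) :=
  inferInstanceAs (Decidable (∃ k : Fin d, step k x = some y ∨ step k y = some x))

/-- `n_i(x,η)`: the number of nearest neighbours of `x` in state `i`. -/
def nCount (i : Fin 4) (x : Site d N) (η : Config d N) : ℝ :=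
  ∑ y : Site d N, if nbr x y then eta i η y else 0

/-- The birth rate `β(x,ξ,ω) = λ₁ n₁(x) + λ₂ n₃(x)`. -/
def beta (lam1 lam2 : ℝ) (x : Site d N) (η : Config d N) : ℝ :=
  lam1 * nCount 1 x η + lam2 * nCount 3 x η

/-- The exchange (stirring) generator `𝓛_N` with diffusivity `D`. -/
def exchGen (D : ℝ) (f : Config d N → ℝ) (η : Config d N) : ℝ :=
  D * ∑ k : Fin d, ∑ x : Site d N,
    (step k x).elim 0 fun y => f (swap x y η) - f η

/-- The generalized contact process generator `𝕃_N`. -/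
def contactGen (lam1 lam2 r : ℝ) (f : Config d N → ℝ) (η : Config d N) : ℝ :=
  ∑ x : Site d N,
    ((r * (1 - b2r (η x).2) + b2r (η x).2) * (f (flipOmega x η) - f η)
      + (beta lam1 lam2 x η * (1 - b2r (η x).1) + b2r (η x).1) * (f (flipXi x η) - f η))

/-- The left boundary `Γ_N^-` (first coordinate `−N`). -/
def leftB (d N : ℕ) : Finset (Site d N) := univ.filter fun x => x.1.val = 0

/-- The right boundary `Γ_N^+` (first coordinate `N`). -/
def rightB (d N : ℕ) : Finset (Site d N) := univ.filter fun x => x.1.val = 2 * N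

/-- The quadruple of rates `(b₀,b₁,b₂,b₃)` built from `(b₁,b₂,b₃)`,
with `b₀ = 1 − b₁ − b₂ − b₃`. -/
def rate4 (b1 b2 b3 : Site d N → ℝ) : Fin 4 → Site d N → ℝ :=
  fun i => if i = 1 then b1 else if i = 2 then b2 else if i = 3 then b3
    else fun x => 1 - b1 x - b2 x - b3 x

/-- The boundary generator `L_{b̂,θ̂,N}`. -/
def bdryGen (b1 b2 b3 : Site d N → ℝ) (θl θr : ℝ) (f : Config d N → ℝ)
    (η : Config d N) : ℝ :=
  (N : ℝ) ^ (-θl) * ∑ i : Fin 4, ∑ x ∈ leftB d N,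
      rate4 b1 b2 b3 i x * (f (setState i x η) - f η)
  + (N : ℝ) ^ (-θr) * ∑ i : Fin 4, ∑ x ∈ rightB d N,
      rate4 b1 b2 b3 i x * (f (setState i x η) - f η)

/-- The full generator `L_N = N²𝓛_N + N²L_{b̂,θ̂,N} + 𝕃_N`. -/
def fullGen (D lam1 lam2 r : ℝ) (b1 b2 b3 : Site d N → ℝ) (θl θr : ℝ)
    (f : Config d N → ℝ) (η : Config d N) : ℝ :=
  (N : ℝ) ^ (2 : ℕ) * exchGen D f η + (N : ℝ) ^ (2 : ℕ) * bdryGen b1 b2 b3 θl θr f η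
    + contactGen lam1 lam2 r f η

/-- The weight `ν^N_α̂(ξ,ω) = ∏_x α_{state(x)}(x)` of the product measure. -/
def nu (a1 a2 a3 : Site d N → ℝ) (η : Config d N) : ℝ :=
  ∏ x : Site d N, rate4 a1 a2 a3 (state (η x)) x

/-- The macroscopic point `x/N ∈ [−1,1] × 𝕋^{d−1}`, lifted to `ℝ × ℝ^{d−1}`. -/
def pt (x : Site d N) : ℝ × (Fin (d - 1) → ℝ) :=
  (((x.1.val : ℝ) - N) / N, fun j => ((x.2 j).val : ℝ) / N)

/-- The exchange Dirichlet form `𝒟_N(f,ν^N_α̂)`. -/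
def exchDirForm (D : ℝ) (a1 a2 a3 : Site d N → ℝ) (f : Config d N → ℝ) : ℝ :=
  D * ∑ k : Fin d, ∑ x : Site d N,
    (step k x).elim 0 fun y => ∑ η : Config d N,
      (Real.sqrt (f (swap x y η)) - Real.sqrt (f η)) ^ 2 * nu a1 a2 a3 η

/-- The boundary Dirichlet form `D_{b̂,θ̂,N}(f,ν^N_α̂)`. -/
def bdryDirForm (b1 b2 b3 : Site d N → ℝ) (θl θr : ℝ) (a1 a2 a3 : Site d N → ℝ)
    (f : Config d N → ℝ) : ℝ :=
  (N : ℝ) ^ (-θl) * ∑ i : Fin 4, ∑ x ∈ leftB d N, ∑ η : Config d N,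
      rate4 b1 b2 b3 i x * (1 - eta i η x)
        * (Real.sqrt (f (setState i x η)) - Real.sqrt (f η)) ^ 2 * nu a1 a2 a3 η
  + (N : ℝ) ^ (-θr) * ∑ i : Fin 4, ∑ x ∈ rightB d N, ∑ η : Config d N,
      rate4 b1 b2 b3 i x * (1 - eta i η x)
        * (Real.sqrt (f (setState i x η)) - Real.sqrt (f η)) ^ 2 * nu a1 a2 a3 η

/-!
Both parts of `𝕃_N` are sums over sites `x` of jump operators `g ↦ c(η) (g(Tη) - g(η))`, where
`T` flips one coordinate at `x` (an involution) and `0 ≤ c ≤ C` with `C` independent of `N` (the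
birth rate is at most `2d(λ₁ + λ₂)`). Since `(s - t) t ≤ s² / 4`, such a term contributes at most
`(C / 4) ∑ f(Tη) ν(η) = (C / 4) ∑ f(η) ν(Tη)` to `⟨𝕃_N √f, √f⟩_ν`. Changing the state at one site
multiplies `ν` by `α_new / α_old ≤ 1 / m`, where `m > 0` bounds the four densities `α₀, …, α₃`
from below; for `α̂_N = ĝ(·/N)` such an `m` exists uniformly in `N`, because `1 - g₁ - g₂ - g₃`
is continuous and positive on the compact slab `[-1,1] × [0,1]^{d-1}`. So each of the at most
`3 N^d` sites contributes at most `C / (4m)` per flip.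
-/

theorem sub_mul_le_sq_div_four (s t : ℝ) : (s - t) * t ≤ s ^ 2 / 4 := by
  nlinarith [sq_nonneg (s - 2 * t)]

theorem sum_jump_mul_sqrt_le {α : Type*} [Fintype α] {T : α → α} (hT : Function.Involutive T)
    {c ν f : α → ℝ} {C K : ℝ} (hc : ∀ a, c a ∈ Set.Icc 0 C) (hν : ∀ a, 0 ≤ ν a)
    (hνT : ∀ a, ν (T a) ≤ K * ν a) (hf : ∀ a, 0 ≤ f a) :
    ∑ a, c a * (√(f (T a)) - √(f a)) * √(f a) * ν a ≤ C * K / 4 * ∑ a, f a * ν a := by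
  have hjump : ∀ a, c a * (√(f (T a)) - √(f a)) * √(f a) * ν a ≤ c a * f (T a) * ν a / 4 := by
    intro a
    have h := mul_le_mul_of_nonneg_left (sub_mul_le_sq_div_four √(f (T a)) √(f a)) (hc a).1
    rw [Real.sq_sqrt (hf _)] at h
    nlinarith [hν a]
  have hrate : ∀ a, c (T a) * f a * ν (T a) ≤ C * K * (f a * ν a) := by
    intro a
    have hC : 0 ≤ C := (hc (T a)).1.trans (hc (T a)).2
    calc c (T a) * f a * ν (T a) = c (T a) * (f a * ν (T a)) := by ring
      _ ≤ C * (f a * (K * ν a)) :=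
        mul_le_mul (hc (T a)).2 (mul_le_mul_of_nonneg_left (hνT a) (hf a))
          (mul_nonneg (hf a) (hν _)) hC
      _ = C * K * (f a * ν a) := by ring
  calc ∑ a, c a * (√(f (T a)) - √(f a)) * √(f a) * ν a
      ≤ ∑ a, c a * f (T a) * ν a / 4 := sum_le_sum fun a _ => hjump a
    _ = ∑ a, c (T a) * f a * ν (T a) / 4 :=
        Fintype.sum_bijective T hT.bijective _ _ fun a => by rw [hT a]
    _ ≤ ∑ a, C * K * (f a * ν a) / 4 := sum_le_sum fun a _ => by linarith [hrate a]
    _ = C * K / 4 * ∑ a, f a * ν a := by rw [mul_sum]; exact sum_congr rfl fun a _ => by ring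

theorem mul_prod_update_le {ι β : Type*} [Fintype ι] [DecidableEq ι] (w : ι → β → ℝ)
    (σ : ι → β) {i : ι} {b : β} {m : ℝ} (hm0 : 0 ≤ m) (hσ : ∀ j, 0 ≤ w j (σ j))
    (hb : w i b ≤ 1) (hm : m ≤ w i (σ i)) :
    m * ∏ j, w j (Function.update σ i b j) ≤ ∏ j, w j (σ j) := by
  rw [← mul_prod_erase univ _ (mem_univ i),
    ← mul_prod_erase univ (fun j => w j (σ j)) (mem_univ i)]
  have hrest :
      ∏ j ∈ univ.erase i, w j (Function.update σ i b j) = ∏ j ∈ univ.erase i, w j (σ j) :=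
    prod_congr rfl fun j hj => by rw [Function.update_of_ne (ne_of_mem_erase hj)]
  rw [hrest, Function.update_self, ← mul_assoc]
  exact mul_le_mul_of_nonneg_right ((mul_le_of_le_one_right hm0 hb).trans hm)
    (prod_nonneg fun j _ => hσ j)

theorem sum_rate4 (a1 a2 a3 : Site d N → ℝ) (x : Site d N) : ∑ i, rate4 a1 a2 a3 i x = 1 := by
  simp only [rate4, Fin.sum_univ_four, zero_ne_one, ↓reduceIte, Fin.reduceEq]
  ring

theorem rate4_le_one {a1 a2 a3 : Site d N → ℝ} {x : Site d N}
    (h : ∀ j, 0 ≤ rate4 a1 a2 a3 j x) (i : Fin 4) : rate4 a1 a2 a3 i x ≤ 1 :=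
  sum_rate4 a1 a2 a3 x ▸ single_le_sum (fun j _ => h j) (mem_univ i)

theorem le_rate4 {a1 a2 a3 : Site d N → ℝ} {x : Site d N} {m : ℝ} (h1 : m ≤ a1 x)
    (h2 : m ≤ a2 x) (h3 : m ≤ a3 x) (h0 : m ≤ 1 - a1 x - a2 x - a3 x) (i : Fin 4) :
    m ≤ rate4 a1 a2 a3 i x := by
  fin_cases i <;> simpa [rate4]

theorem mul_nu_update_le {a1 a2 a3 : Site d N → ℝ} {m : ℝ} (hm : 0 ≤ m)
    (hrate : ∀ i x, m ≤ rate4 a1 a2 a3 i x) (η : Config d N) (x : Site d N) (v : Bool × Bool) :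
    m * nu a1 a2 a3 (Function.update η x v) ≤ nu a1 a2 a3 η :=
  mul_prod_update_le (fun y v => rate4 a1 a2 a3 (state v) y) η hm (fun y => hm.trans (hrate _ y))
    (rate4_le_one (fun i => hm.trans (hrate i x)) _) (hrate _ x)

theorem flipOmega_involutive (x : Site d N) : Function.Involutive (flipOmega x) := by
  intro η
  ext1 z
  by_cases hz : z = x <;> simp [flipOmega, Function.update, hz]

theorem flipXi_involutive (x : Site d N) : Function.Involutive (flipXi x) := by
  intro η
  ext1 z
  by_cases hz : z = x <;> simp [flipXi, Function.update, hz]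

theorem cyc_injective : Function.Injective (@cyc N) := fun v w h =>
  Fin.ext <| Nat.ModEq.eq_of_lt_of_lt (Nat.ModEq.add_right_cancel' 1 (congrArg Fin.val h))
    v.isLt w.isLt

theorem eq_of_step_eq_some {k : Fin d} {a b x : Site d N} (ha : step k a = some x)
    (hb : step k b = some x) : a = b := by
  unfold step at ha hb
  split_ifs at ha hb with hk h1 h2
  · simp only [Option.some.injEq, Prod.ext_iff, Fin.ext_iff] at ha hb
    exact Prod.ext (Fin.ext (by omega)) (ha.2.trans hb.2.symm)
  · simp only [Option.some.injEq, Prod.ext_iff] at ha hb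
    refine Prod.ext (ha.1.trans hb.1.symm) (funext fun j => ?_)
    have hja := congrFun ha.2 j
    have hjb := congrFun hb.2 j
    split_ifs at hja hjb
    · exact cyc_injective (hja.trans hjb.symm)
    · exact hja.trans hjb.symm

theorem card_filter_nbr_le (x : Site d N) : (univ.filter (nbr x)).card ≤ 2 * d := by
  have hsub : univ.filter (nbr x) ⊆ univ.biUnion fun k : Fin d =>
      univ.filter (fun y => step k x = some y) ∪ univ.filter (fun y => step k y = some x) := by
    intro y hy
    obtain ⟨k, hk⟩ := (mem_filter.1 hy).2
    simpa using ⟨k, hk⟩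
  have hdir : ∀ k : Fin d, (univ.filter (fun y => step k x = some y)
      ∪ univ.filter (fun y => step k y = some x)).card ≤ 1 + 1 := fun k =>
    (card_union_le _ _).trans <| add_le_add
      (card_le_one.2 fun a ha b hb =>
        Option.some.inj ((mem_filter.1 ha).2.symm.trans (mem_filter.1 hb).2))
      (card_le_one.2 fun a ha b hb => eq_of_step_eq_some (mem_filter.1 ha).2 (mem_filter.1 hb).2)
  calc (univ.filter (nbr x)).card ≤ _ := card_le_card hsub
    _ ≤ ∑ _k : Fin d, (1 + 1) := card_biUnion_le.trans (sum_le_sum fun k _ => hdir k)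
    _ = 2 * d := by simp [mul_comm]

theorem nCount_nonneg (i : Fin 4) (x : Site d N) (η : Config d N) : 0 ≤ nCount i x η :=
  sum_nonneg fun y _ => by unfold eta; split_ifs <;> norm_num

theorem nCount_le (i : Fin 4) (x : Site d N) (η : Config d N) : nCount i x η ≤ 2 * d :=
  calc nCount i x η ≤ ∑ y, if nbr x y then (1 : ℝ) else 0 :=
        sum_le_sum fun y _ => by unfold eta; split_ifs <;> norm_num
    _ = (univ.filter (nbr x)).card := by rw [sum_boole]
    _ ≤ 2 * d := by exact_mod_cast card_filter_nbr_le x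

theorem beta_nonneg {lam1 lam2 : ℝ} (hlam1 : 0 ≤ lam1) (hlam2 : 0 ≤ lam2) (x : Site d N)
    (η : Config d N) : 0 ≤ beta lam1 lam2 x η :=
  add_nonneg (mul_nonneg hlam1 (nCount_nonneg _ _ _)) (mul_nonneg hlam2 (nCount_nonneg _ _ _))

theorem beta_le {lam1 lam2 : ℝ} (hlam1 : 0 ≤ lam1) (hlam2 : 0 ≤ lam2) (x : Site d N)
    (η : Config d N) : beta lam1 lam2 x η ≤ 2 * d * (lam1 + lam2) := by
  unfold beta
  nlinarith [nCount_le 1 x η, nCount_le 3 x η]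

theorem mul_one_sub_b2r_add_b2r_mem_Icc {c : ℝ} (hc : 0 ≤ c) (b : Bool) :
    c * (1 - b2r b) + b2r b ∈ Set.Icc 0 (c + 1) := by
  cases b <;> simp [b2r, hc]

theorem sum_contactGen_mul (lam1 lam2 r : ℝ) (g ν : Config d N → ℝ) :
    ∑ η, contactGen lam1 lam2 r g η * g η * ν η
      = ∑ x, (∑ η, (r * (1 - b2r (η x).2) + b2r (η x).2) * (g (flipOmega x η) - g η) * g η * ν η
        + ∑ η, (beta lam1 lam2 x η * (1 - b2r (η x).1) + b2r (η x).1)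
            * (g (flipXi x η) - g η) * g η * ν η) := by
  simp only [contactGen, sum_mul, add_mul]
  rw [sum_comm]
  simp only [sum_add_distrib]

theorem card_site_le (hd : 1 ≤ d) (hN : 1 ≤ N) : (Fintype.card (Site d N) : ℝ) ≤ 3 * N ^ d := by
  have hcard : Fintype.card (Site d N) ≤ 3 * N ^ d :=
    calc Fintype.card (Site d N) = (2 * N + 1) * N ^ (d - 1) := by simp
      _ ≤ 3 * N * N ^ (d - 1) := Nat.mul_le_mul_right _ (by omega)
      _ = 3 * N ^ d := by rw [mul_assoc, ← pow_succ', Nat.sub_add_cancel hd]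
  exact_mod_cast hcard

theorem sum_contactGen_sqrt_mul_le (hd : 1 ≤ d) (hN : 1 ≤ N) {lam1 lam2 r : ℝ}
    (hlam1 : 0 ≤ lam1) (hlam2 : 0 ≤ lam2) (hr : 0 ≤ r) {a1 a2 a3 : Site d N → ℝ} {m : ℝ}
    (hm : 0 < m) (hrate : ∀ i x, m ≤ rate4 a1 a2 a3 i x) {f : Config d N → ℝ}
    (hf : ∀ η, 0 ≤ f η) (hsum : ∑ η, f η * nu a1 a2 a3 η = 1) :
    ∑ η, contactGen lam1 lam2 r (fun σ => √(f σ)) η * √(f η) * nu a1 a2 a3 η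
      ≤ 3 * (r + 2 * d * (lam1 + lam2) + 2) / (4 * m) * N ^ d := by
  have hν : ∀ η, 0 ≤ nu a1 a2 a3 η := fun η => prod_nonneg fun y _ => hm.le.trans (hrate _ y)
  have hνT : ∀ x v η, nu a1 a2 a3 (Function.update η x v) ≤ m⁻¹ * nu a1 a2 a3 η := fun x v η =>
    (le_inv_mul_iff₀ hm).2 (mul_nu_update_le hm.le hrate η x v)
  have hsite : ∀ x : Site d N,
      ∑ η, (r * (1 - b2r (η x).2) + b2r (η x).2) * (√(f (flipOmega x η)) - √(f η)) * √(f η)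
          * nu a1 a2 a3 η
        + ∑ η, (beta lam1 lam2 x η * (1 - b2r (η x).1) + b2r (η x).1)
          * (√(f (flipXi x η)) - √(f η)) * √(f η) * nu a1 a2 a3 η
      ≤ (r + 2 * d * (lam1 + lam2) + 2) / (4 * m) := by
    intro x
    have hω := sum_jump_mul_sqrt_le (flipOmega_involutive x) (C := r + 1)
      (fun η => mul_one_sub_b2r_add_b2r_mem_Icc hr (η x).2) hν (fun η => hνT x _ η) hf
    have hξ := sum_jump_mul_sqrt_le (flipXi_involutive x) (C := 2 * d * (lam1 + lam2) + 1)
      (fun η => Set.Icc_subset_Icc_right (by linarith [beta_le hlam1 hlam2 x η])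
        (mul_one_sub_b2r_add_b2r_mem_Icc (beta_nonneg hlam1 hlam2 x η) (η x).1)) hν
      (fun η => hνT x _ η) hf
    rw [hsum] at hω hξ
    calc _ ≤ (r + 1) * m⁻¹ / 4 * 1 + (2 * d * (lam1 + lam2) + 1) * m⁻¹ / 4 * 1 :=
          add_le_add hω hξ
      _ = _ := by field_simp; ring
  calc ∑ η, contactGen lam1 lam2 r (fun σ => √(f σ)) η * √(f η) * nu a1 a2 a3 η
      ≤ ∑ _x : Site d N, (r + 2 * d * (lam1 + lam2) + 2) / (4 * m) :=
        (sum_contactGen_mul lam1 lam2 r _ _).trans_le (sum_le_sum fun x _ => hsite x)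
    _ = Fintype.card (Site d N) * ((r + 2 * d * (lam1 + lam2) + 2) / (4 * m)) := by
        rw [sum_const, nsmul_eq_mul, card_univ]
    _ ≤ 3 * N ^ d * ((r + 2 * d * (lam1 + lam2) + 2) / (4 * m)) :=
        mul_le_mul_of_nonneg_right (card_site_le hd hN) (by positivity)
    _ = _ := by ring

def unitSlab (d : ℕ) : Set (ℝ × (Fin (d - 1) → ℝ)) :=
  Set.Icc (-1) 1 ×ˢ Set.univ.pi fun _ => Set.Icc 0 1

theorem isCompact_unitSlab (d : ℕ) : IsCompact (unitSlab d) :=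
  isCompact_Icc.prod (isCompact_univ_pi fun _ => isCompact_Icc)

theorem pt_mem_unitSlab (hN : 1 ≤ N) (x : Site d N) : pt x ∈ unitSlab d := by
  have hN' : (0 : ℝ) < N := by exact_mod_cast hN
  have hx1 : (x.1.val : ℝ) ≤ 2 * N := by exact_mod_cast Nat.lt_succ_iff.1 x.1.isLt
  refine ⟨⟨?_, ?_⟩, fun j _ => ⟨?_, ?_⟩⟩ <;> simp only [pt]
  · rw [le_div_iff₀ hN']
    linarith [(Nat.cast_nonneg x.1.val : (0 : ℝ) ≤ _)]
  · rw [div_le_one hN']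
    linarith
  · positivity
  · rw [div_le_one hN']
    exact_mod_cast (x.2 j).isLt.le

theorem contact_generator_bound_general (d : ℕ) (hd : 1 ≤ d)
    (lam1 lam2 r : ℝ) (hlam1 : 0 < lam1) (hlam2 : 0 < lam2) (hr : 0 < r)
    (cs Cs : ℝ) (hcs : 0 < cs)
    (V : Set (ℝ × (Fin (d - 1) → ℝ)))
    (hVslab : {p : ℝ × (Fin (d - 1) → ℝ) | p.1 ∈ Set.Icc (-1 : ℝ) 1} ⊆ V)
    (g : Fin 3 → (ℝ × (Fin (d - 1) → ℝ)) → ℝ)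
    (hg : ∀ i, ContDiffOn ℝ 2 (g i) V)
    (hgbd : ∀ i : Fin 3, ∀ p ∈ V, cs ≤ g i p ∧ g i p ≤ Cs)
    (hgsum : ∀ p ∈ V, g 0 p + g 1 p + g 2 p < 1) :
    ∃ C2 : ℝ, 0 < C2 ∧ ∀ N : ℕ, 1 ≤ N → ∀ f : Config d N → ℝ,
      (∀ η, 0 ≤ f η) →
      (∑ η : Config d N,
        f η * nu (fun x => g 0 (pt x)) (fun x => g 1 (pt x)) (fun x => g 2 (pt x)) η = 1) →
      ∑ η : Config d N, contactGen lam1 lam2 r (fun σ => Real.sqrt (f σ)) η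
          * Real.sqrt (f η)
          * nu (fun x => g 0 (pt x)) (fun x => g 1 (pt x)) (fun x => g 2 (pt x)) η
        ≤ C2 * (N : ℝ) ^ d := by
  have hslabV : unitSlab d ⊆ V := fun p hp => hVslab hp.1
  have hcont : ContinuousOn (fun p => 1 - (g 0 p + g 1 p + g 2 p)) (unitSlab d) :=
    (continuousOn_const.sub (((hg 0).continuousOn.add (hg 1).continuousOn).add
      (hg 2).continuousOn)).mono hslabV
  obtain ⟨ε, hε, hεslab⟩ := (isCompact_unitSlab d).exists_forall_le' hcont
    fun p hp => sub_pos.2 (hgsum p (hslabV hp))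
  have hm : 0 < min cs ε := lt_min hcs hε
  refine ⟨3 * (r + 2 * d * (lam1 + lam2) + 2) / (4 * min cs ε), by positivity,
    fun N hN f hf hsum => sum_contactGen_sqrt_mul_le hd hN hlam1.le hlam2.le hr.le hm
      (fun i x => ?_) hf hsum⟩
  have hx := pt_mem_unitSlab hN x
  have hlow := fun i => (hgbd i _ (hslabV hx)).1
  have hgap := hεslab _ hx
  have hmcs := min_le_left cs ε
  have hmε := min_le_right cs ε
  exact le_rate4 (by linarith [hlow 0]) (by linarith [hlow 1]) (by linarith [hlow 2])
    (by linarith) i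

/-- Bound on the contact process term: for a smooth profile
`α̂_N(x) = ĝ(x/N)` there is a constant `C₂ > 0` (depending only on `d`, `λ₁`,
`λ₂`, `r`, `c*`, `C*`) such that `⟨𝕃_N √f, √f⟩_{ν} ≤ C₂ N^d` for every `N ≥ 1`
and every density `f` with respect to `ν = ν^N_{α̂_N}`. -/
theorem contact_generator_bound (d : ℕ) (hd : 1 ≤ d)
    (lam1 lam2 r : ℝ) (hlam1 : 0 < lam1) (hlam2 : 0 < lam2) (hr : 0 < r)
    (cs Cs : ℝ) (hcs : 0 < cs) (hcsCs : cs < Cs) (hCs : Cs < 1)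
    (V : Set (ℝ × (Fin (d - 1) → ℝ))) (hV : IsOpen V)
    (hVslab : {p : ℝ × (Fin (d - 1) → ℝ) | p.1 ∈ Set.Icc (-1 : ℝ) 1} ⊆ V)
    (hVper : ∀ p ∈ V, ∀ j : Fin (d - 1), (p.1, Function.update p.2 j (p.2 j + 1)) ∈ V)
    (g : Fin 3 → (ℝ × (Fin (d - 1) → ℝ)) → ℝ)
    (hg : ∀ i, ContDiffOn ℝ 2 (g i) V)
    (hgper : ∀ (i : Fin 3) (p : ℝ × (Fin (d - 1) → ℝ)) (j : Fin (d - 1)),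
      g i (p.1, Function.update p.2 j (p.2 j + 1)) = g i p)
    (hgbd : ∀ i : Fin 3, ∀ p ∈ V, cs ≤ g i p ∧ g i p ≤ Cs)
    (hgsum : ∀ p ∈ V, g 0 p + g 1 p + g 2 p < 1) :
    ∃ C2 : ℝ, 0 < C2 ∧ ∀ N : ℕ, 1 ≤ N → ∀ f : Config d N → ℝ,
      (∀ η, 0 ≤ f η) →
      (∑ η : Config d N,
        f η * nu (fun x => g 0 (pt x)) (fun x => g 1 (pt x)) (fun x => g 2 (pt x)) η = 1) →
      ∑ η : Config d N, contactGen lam1 lam2 r (fun σ => Real.sqrt (f σ)) η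
          * Real.sqrt (f η)
          * nu (fun x => g 0 (pt x)) (fun x => g 1 (pt x)) (fun x => g 2 (pt x)) η
        ≤ C2 * (N : ℝ) ^ d :=
  contact_generator_bound_general d hd lam1 lam2 r hlam1 hlam2 hr cs Cs hcs V hVslab g hg hgbd hgsum

end SIT
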